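/- arXiv:2305.16451 — 3 statements merged into one kernel-verified Lean document; each statement's English description precedes it below -/
import Mathlib

section
/- For every tree T on n+1 vertices, σ⁻(T) ≤ ⌊C(T)/2⌋ + 1, where C(T) is the minimum of ||S₁|−|S₂|| over all partitions of V(T) into two nonempty sets S₁, S₂ each inducing a connected subgraph of T. -/
open SimpleGraph

variable {V : Type*}

/-- The set of "negative" edges of `G` under the parity labeling induced by
the bijection `f : V ≃ Fin (Fintype.card V)`: edges whose endpoint labels
have opposite parity. -/
def negSet [Fintype V] (G : SimpleGraph V) (f : V ≃ Fin (Fintype.card V)) : Set (Sym2 V) :=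
  {e ∈ G.edgeSet |
    Sym2.lift ⟨fun u v => ((f u : ℕ) % 2 ≠ (f v : ℕ) % 2), fun u v => propext ne_comm⟩ e}

/-- The number of negative edges under the labeling `f`. -/
noncomputable def negCount [Fintype V] (G : SimpleGraph V) (f : V ≃ Fin (Fintype.card V)) : ℕ :=
  (negSet G f).ncard

/-- The rna number of `G`: the minimum number of negative edges over all parity labelings. -/
noncomputable def rna [Fintype V] (G : SimpleGraph V) : ℕ :=
  sInf (Set.range (negCount G))

/-- `C(G)`: minimum of `||S₁| − |S₂||` over partitions of the vertex set into two
nonempty parts each inducing a connected subgraph. -/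
noncomputable def Cval [Fintype V] (G : SimpleGraph V) : ℕ :=
  sInf {d | ∃ S : Set V, S.Nonempty ∧ Sᶜ.Nonempty ∧ (G.induce S).Connected ∧
    (G.induce Sᶜ).Connected ∧ d = ((S.ncard : ℤ) - (Sᶜ.ncard : ℤ)).natAbs}

/-- `G` is a star: some center `c` is adjacent exactly to all other vertices,
with no other edges. -/
def IsStar (G : SimpleGraph V) : Prop :=
  ∃ c : V, ∀ a b : V, G.Adj a b ↔ (a ≠ b ∧ (a = c ∨ b = c))


section Aux
variable {V : Type*} {G : SimpleGraph V} {O : Set V}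

lemma exists_exit {A O : Set V} {x y : ↥A} (p : (G.induce A).Walk x y) :
    (x : V) ∈ O → (y : V) ∉ O → ∃ u v : V, u ∈ O ∧ v ∈ A ∧ v ∉ O ∧ G.Adj u v := by
  induction p with
  | nil => intro hx hy; exact absurd hx hy
  | @cons a b c h q ih =>
    intro hx hy
    by_cases hb : (b : V) ∈ O
    · exact ih hb hy
    · exact ⟨a, b, hx, b.2, hb, h⟩

lemma induce_singleton_connected (G : SimpleGraph V) (a : V) :
    (G.induce {a}).Connected := by
  haveI : Nonempty ↥({a} : Set V) := ⟨⟨a, rfl⟩⟩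
  exact ⟨fun u v => by
    have : u = v := Subtype.ext (u.2.trans v.2.symm)
    exact this ▸ Reachable.refl u⟩

lemma exists_path_in (hO : (G.induce O).Connected) {u w : V} (hu : u ∈ O) (hw : w ∈ O) :
    ∃ p : G.Walk u w, p.IsPath ∧ ∀ x ∈ p.support, x ∈ O := by
  classical
  obtain ⟨q⟩ := hO.preconnected ⟨u, hu⟩ ⟨w, hw⟩
  refine ⟨(q.map (SimpleGraph.Embedding.induce O).toHom).bypass,
    Walk.bypass_isPath _, fun x hx => ?_⟩
  have : x ∈ (q.map (SimpleGraph.Embedding.induce O).toHom).support := Walk.support_bypass_subset _ hx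
  rw [Walk.support_map (f := (Embedding.induce O).toHom)] at this
  obtain ⟨z, _, rfl⟩ := List.mem_map.mp this
  exact z.2

lemma unique_nbr (hT : G.IsTree) (hO : (G.induce O).Connected)
    {v u w : V} (hv : v ∉ O) (hu : u ∈ O) (hw : w ∈ O)
    (h1 : G.Adj v u) (h2 : G.Adj v w) : u = w := by
  by_contra hne
  obtain ⟨p, hp, hsupp⟩ := exists_path_in hO hu hw
  have hq : (Walk.cons h1.symm (Walk.cons h2 Walk.nil)).IsPath := by
    rw [Walk.cons_isPath_iff, Walk.cons_isPath_iff]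
    refine ⟨⟨Walk.IsPath.nil, by simpa using h2.ne⟩, ?_⟩
    simp only [Walk.support_cons, Walk.support_nil, List.mem_cons, List.not_mem_nil, or_false]
    rintro (rfl | rfl)
    · exact h1.ne rfl
    · exact hne rfl
  have := (hT.existsUnique_path u w).unique hp hq
  have hvmem : v ∈ p.support := by
    rw [this]; simp
  exact hv (hsupp v hvmem)

lemma cross_unique (hT : G.IsTree) {A : Set V} (hA : (G.induce A).Connected)
    (hB : (G.induce Aᶜ).Connected) {u1 v1 u2 v2 : V}
    (hu1 : u1 ∈ A) (hv1 : v1 ∉ A) (hu2 : u2 ∈ A) (hv2 : v2 ∉ A)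
    (h1 : G.Adj u1 v1) (h2 : G.Adj u2 v2) : u1 = u2 ∧ v1 = v2 := by
  have hv : v1 = v2 := by
    by_contra hne
    obtain ⟨pA, hpA, hsA⟩ := exists_path_in hA hu2 hu1
    obtain ⟨pB, hpB, hsB⟩ := exists_path_in hB (show v1 ∈ Aᶜ from hv1) (show v2 ∈ Aᶜ from hv2)
    have hP1 : (Walk.cons h2.symm pA).reverse.IsPath := by
      refine Walk.IsPath.reverse ?_
      rw [Walk.cons_isPath_iff]
      exact ⟨hpA, fun hmem => hv2 (hsA _ hmem)⟩
    have hP2 : (Walk.cons h1 pB).IsPath := by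
      rw [Walk.cons_isPath_iff]
      exact ⟨hpB, fun hmem => (hsB _ hmem) hu1⟩
    have heq := (hT.existsUnique_path u1 v2).unique hP1 hP2
    have hv1mem : v1 ∈ (Walk.cons h2.symm pA).reverse.support := by
      rw [heq]; simp
    rw [Walk.support_reverse, List.mem_reverse, Walk.support_cons] at hv1mem
    rcases List.mem_cons.mp hv1mem with h | h
    · exact hne h
    · exact hv1 (hsA _ h)
  refine ⟨unique_nbr hT hA hv1 hu1 hu2 h1.symm ?_, hv⟩
  rw [hv]; exact h2.symm

lemma grow [Fintype V] {A : Set V} (hA : (G.induce A).Connected) :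
    ∀ k, 0 < k → k ≤ A.ncard → ∃ O, O ⊆ A ∧ O.ncard = k ∧ (G.induce O).Connected := by
  intro k
  induction k with
  | zero => intro h; exact absurd h (lt_irrefl 0)
  | succ k ih =>
    intro _ hk1
    rcases Nat.eq_zero_or_pos k with rfl | hkpos
    · obtain ⟨a⟩ := hA.nonempty
      exact ⟨{(a : V)}, by simpa using a.2, Set.ncard_singleton _,
        induce_singleton_connected G a⟩
    · obtain ⟨O, hOA, hOcard, hOconn⟩ := ih hkpos (le_trans (Nat.le_succ k) hk1)
      -- O ≠ A since ncard O = k < k+1 ≤ ncard A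
      have hne : O ≠ A := by
        intro h; rw [h] at hOcard; omega
      have hssub : O ⊂ A := hOA.ssubset_of_ne hne
      obtain ⟨y, hyA, hyO⟩ := Set.exists_of_ssubset hssub
      obtain ⟨x⟩ := hOconn.nonempty
      have hxA : (x : V) ∈ A := hOA x.2
      obtain ⟨q⟩ := hA.preconnected ⟨x, hxA⟩ ⟨y, hyA⟩
      obtain ⟨u, v, huO, hvA, hvO, hadj⟩ := exists_exit q x.2 hyO
      refine ⟨O ∪ {v}, ?_, ?_, ?_⟩
      · exact Set.union_subset hOA (by simpa using hvA)
      · rw [Set.union_singleton, Set.ncard_insert_of_notMem hvO]; omega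
      · have : O ∪ {v} = O ∪ {u, v} := by
          ext z
          simp only [Set.mem_union, Set.mem_singleton_iff, Set.mem_insert_iff]
          constructor
          · rintro (h | rfl); exacts [Or.inl h, Or.inr (Or.inr rfl)]
          · rintro (h | rfl | rfl); exacts [Or.inl h, Or.inl huO, Or.inr rfl]
        rw [this]
        exact induce_union_connected hOconn.preconnected (induce_pair_connected_of_adj hadj).preconnected
          ⟨u, huO, by simp⟩

def evEquiv (N : ℕ) : {i : Fin N // (i : ℕ) % 2 = 0} ≃ Fin ((N + 1) / 2) where
  toFun x := ⟨(x.1 : ℕ) / 2, by have := x.1.2; have := x.2; omega⟩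
  invFun j := ⟨⟨2 * j, by have := j.2; omega⟩, by show (2 * (j : ℕ)) % 2 = 0; omega⟩
  left_inv x := by
    have hx := x.2
    apply Subtype.ext
    apply Fin.ext
    show 2 * ((x.1 : ℕ) / 2) = (x.1 : ℕ)
    omega
  right_inv j := by
    apply Fin.ext
    show (2 * (j : ℕ)) / 2 = (j : ℕ)
    omega

lemma card_ev (N : ℕ) : Fintype.card {i : Fin N // (i : ℕ) % 2 = 0} = (N + 1) / 2 := by
  rw [Fintype.card_congr (evEquiv N), Fintype.card_fin]

lemma card_coe_ncard [Fintype V] (O : Set V) [Fintype O] : Fintype.card O = O.ncard := by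
  rw [Set.ncard_eq_toFinset_card', Set.toFinset_card]

lemma exists_labeling [Fintype V] {O : Set V}
    (hOcard : O.ncard = (Fintype.card V + 1) / 2) :
    ∃ f : V ≃ Fin (Fintype.card V), ∀ v : V, ((f v : ℕ) % 2 = 0 ↔ v ∈ O) := by
  classical
  set N := Fintype.card V with hN
  set Ev : Set (Fin N) := {i | (i : ℕ) % 2 = 0} with hEvdef
  have hEv : Fintype.card Ev = (N + 1) / 2 := by
    rw [← card_ev N]
    apply Fintype.card_congr
    exact Equiv.refl _
  have hO : Fintype.card O = Fintype.card Ev := by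
    rw [card_coe_ncard, hOcard, hEv]
  have hOc : Fintype.card (↥Oᶜ) = Fintype.card (↥Evᶜ) := by
    rw [Fintype.card_compl_set, Fintype.card_compl_set, hO, Fintype.card_fin, ← hN]
  let e1 : ↥O ≃ ↥Ev := Fintype.equivOfCardEq hO
  let e2 : ↥Oᶜ ≃ ↥Evᶜ := Fintype.equivOfCardEq hOc
  refine ⟨(Equiv.Set.sumCompl O).symm.trans ((e1.sumCongr e2).trans (Equiv.Set.sumCompl Ev)), ?_⟩
  intro v
  by_cases hv : v ∈ O
  · simp only [Equiv.trans_apply, Equiv.Set.sumCompl_symm_apply_of_mem hv,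
      Equiv.sumCongr_apply, Sum.map_inl, Equiv.Set.sumCompl_apply_inl]
    exact iff_of_true (e1 ⟨v, hv⟩).2 hv
  · simp only [Equiv.trans_apply, Equiv.Set.sumCompl_symm_apply_of_notMem hv,
      Equiv.sumCongr_apply, Sum.map_inr, Equiv.Set.sumCompl_apply_inr]
    exact iff_of_false (e2 ⟨v, hv⟩).2 hv

lemma main_bound [Fintype V] (hT : G.IsTree) {A : Set V}
    (hAc : (G.induce A).Connected) (hBc : (G.induce Aᶜ).Connected)
    (hge : Aᶜ.ncard ≤ A.ncard) :
    ∃ f : V ≃ Fin (Fintype.card V),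
      (negSet G f).ncard ≤ (A.ncard - Aᶜ.ncard) / 2 + 1 := by
  classical
  obtain ⟨v0⟩ := hT.isConnected.nonempty
  set N := Fintype.card V with hN
  have hsum : A.ncard + Aᶜ.ncard = N := by
    rw [hN, ← Nat.card_eq_fintype_card]
    exact Set.ncard_add_ncard_compl A
  haveI : Nonempty V := ⟨v0⟩
  have hNpos : 1 ≤ N := by rw [hN]; exact Fintype.card_pos
  have hole : (N + 1) / 2 ≤ A.ncard := by omega
  obtain ⟨O, hOA, hOcard, hOconn⟩ := grow hAc ((N + 1) / 2) (by omega) hole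
  obtain ⟨f, hf⟩ := exists_labeling (O := O) hOcard
  set X : Set (Sym2 V) := {e | ∃ u v : V, u ∈ A ∧ v ∉ A ∧ G.Adj u v ∧ e = s(u, v)} with hXdef
  set Y : Set (Sym2 V) := {e | ∃ u v : V, u ∈ O ∧ v ∈ A \ O ∧ G.Adj u v ∧ e = s(u, v)}
    with hYdef
  have hsub : negSet G f ⊆ X ∪ Y := by
    intro e he
    induction e using Sym2.ind with
    | _ u v =>
      obtain ⟨hadj, hpar⟩ := he
      rw [SimpleGraph.mem_edgeSet] at hadj
      have hpar : (f u : ℕ) % 2 ≠ (f v : ℕ) % 2 := hpar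
      by_cases hu : u ∈ O
      · have hv : v ∉ O := by
          intro hv
          exact hpar (((hf u).mpr hu).trans (((hf v).mpr hv).symm))
        by_cases hvA : v ∈ A
        · exact Or.inr ⟨u, v, hu, ⟨hvA, hv⟩, hadj, rfl⟩
        · exact Or.inl ⟨u, v, hOA hu, hvA, hadj, rfl⟩
      · have hv : v ∈ O := by
          by_contra hv
          have h1 : (f u : ℕ) % 2 = 1 := by
            have := (not_iff_not.mpr (hf u)).mpr hu; omega
          have h2 : (f v : ℕ) % 2 = 1 := by
            have := (not_iff_not.mpr (hf v)).mpr hv; omega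
          exact hpar (h1.trans h2.symm)
        by_cases huA : u ∈ A
        · exact Or.inr ⟨v, u, hv, ⟨huA, hu⟩, hadj.symm, Sym2.eq_swap⟩
        · exact Or.inl ⟨v, u, hOA hv, huA, hadj.symm, Sym2.eq_swap⟩
  have hX : X.ncard ≤ 1 := by
    rcases X.eq_empty_or_nonempty with h | ⟨e0, he0⟩
    · simp [h]
    · have : X ⊆ {e0} := by
        intro e he
        obtain ⟨u, v, hu, hv, hadj, rfl⟩ := he
        obtain ⟨u0, v0', hu0, hv0, hadj0, rfl⟩ := he0
        obtain ⟨h1, h2⟩ := cross_unique hT hAc hBc hu hv hu0 hv0 hadj hadj0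
        rw [h1, h2]; exact rfl
      calc X.ncard ≤ ({e0} : Set (Sym2 V)).ncard :=
            Set.ncard_le_ncard this (Set.finite_singleton e0)
        _ = 1 := Set.ncard_singleton e0
  have hkey : ∀ e ∈ Y, ∃ u w, u ∈ O ∧ w ∈ A \ O ∧ G.Adj w u ∧ e = s(u, w) ∧
      (if h : ∃ x ∈ A \ O, x ∈ e then h.choose else v0) = w := by
    intro e he
    obtain ⟨u, v, hu, hv, hadj, rfl⟩ := he
    have hex : ∃ x ∈ A \ O, x ∈ s(u, v) := ⟨v, hv, Sym2.mem_mk_right u v⟩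
    have hch := hex.choose_spec
    have hchv : hex.choose = v := by
      rcases Sym2.mem_iff.mp hch.2 with h | h
      · exact absurd (h ▸ hch.1).2 (not_not.mpr hu)
      · exact h
    refine ⟨u, v, hu, hv, hadj.symm, rfl, ?_⟩
    rw [dif_pos hex, hchv]
  have hY : Y.ncard ≤ (A \ O).ncard := by
    apply Set.ncard_le_ncard_of_injOn
      (fun e => if h : ∃ x ∈ A \ O, x ∈ e then h.choose else v0)
    · intro e he
      obtain ⟨u, w, _, hw, _, _, hge⟩ := hkey e he
      rw [hge]; exact hw
    · intro e1 h1 e2 h2 heq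
      obtain ⟨u1, w1, hu1, hw1, hadj1, he1, hg1⟩ := hkey e1 h1
      obtain ⟨u2, w2, hu2, hw2, hadj2, he2, hg2⟩ := hkey e2 h2
      simp only at heq
      rw [hg1, hg2] at heq
      subst heq
      have := unique_nbr hT hOconn hw1.2 hu1 hu2 hadj1 hadj2
      rw [he1, he2, this]
  have hAO : (A \ O).ncard = A.ncard - (N + 1) / 2 := by
    rw [Set.ncard_diff hOA, hOcard]
  refine ⟨f, ?_⟩
  calc (negSet G f).ncard ≤ (X ∪ Y).ncard := Set.ncard_le_ncard hsub (Set.toFinite _)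
    _ ≤ X.ncard + Y.ncard := Set.ncard_union_le X Y
    _ ≤ 1 + (A \ O).ncard := Nat.add_le_add hX hY
    _ ≤ (A.ncard - Aᶜ.ncard) / 2 + 1 := by rw [hAO]; omega
end Aux

/-- For every tree on n+1 vertices, σ⁻(T) ≤ ⌊C(T)/2⌋ + 1. -/
theorem rna_le_Cval {V : Type*} [Fintype V] (G : SimpleGraph V) (n : ℕ)
    (hcard : Fintype.card V = n + 1) (hT : G.IsTree) :
    rna G ≤ Cval G / 2 + 1 := by
  classical
  obtain ⟨v0⟩ := hT.isConnected.nonempty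
  rcases Nat.eq_zero_or_pos n with rfl | hn
  · have hsub : Subsingleton V := Fintype.card_le_one_iff_subsingleton.mp (by omega)
    have hempty : negSet G (Fintype.equivFin V) = ∅ := by
      rw [Set.eq_empty_iff_forall_notMem]
      intro e he
      induction e using Sym2.ind with
      | _ u v =>
        obtain ⟨hadj, -⟩ := he
        rw [SimpleGraph.mem_edgeSet] at hadj
        exact G.loopless.irrefl u (Subsingleton.elim u v ▸ hadj)
    have h0 : rna G ≤ 0 :=
      Nat.sInf_le ⟨Fintype.equivFin V, by simp [negCount, hempty]⟩
    omega
  · -- the defining set of Cval is nonempty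
    have hN : 2 ≤ Fintype.card V := by omega
    have huniv : (G.induce (Set.univ : Set V)).Connected :=
      (induceUnivIso G).connected_iff.mpr hT.isConnected
    have hgrow := grow huniv (Fintype.card V - 1) (by omega)
      (by rw [Set.ncard_univ, Nat.card_eq_fintype_card]; omega)
    obtain ⟨A0, -, hA0card, hA0conn⟩ := hgrow
    have hA0sum : A0.ncard + A0ᶜ.ncard = Fintype.card V := by
      rw [← Nat.card_eq_fintype_card]; exact Set.ncard_add_ncard_compl A0
    have hA0c : A0ᶜ.ncard = 1 := by omega
    obtain ⟨a, ha⟩ := Set.ncard_eq_one.mp hA0c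
    have hnonempty : {d | ∃ S : Set V, S.Nonempty ∧ Sᶜ.Nonempty ∧ (G.induce S).Connected ∧
        (G.induce Sᶜ).Connected ∧
        d = ((S.ncard : ℤ) - (Sᶜ.ncard : ℤ)).natAbs}.Nonempty := by
      refine ⟨_, A0, ?_, ?_, hA0conn, ?_, rfl⟩
      · rw [← Set.ncard_pos]; omega
      · rw [← Set.ncard_pos]; omega
      · rw [ha]; exact induce_singleton_connected G a
    have hmem := Nat.sInf_mem hnonempty
    obtain ⟨S, hS1, hS2, hSc, hScc, hd⟩ := hmem
    rcases le_total Sᶜ.ncard S.ncard with hge | hge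
    · obtain ⟨f, hf⟩ := main_bound hT hSc hScc hge
      have h1 : rna G ≤ negCount G f := Nat.sInf_le ⟨f, rfl⟩
      have h2 : negCount G f = (negSet G f).ncard := rfl
      have h3 : Cval G = S.ncard - Sᶜ.ncard := by
        unfold Cval; rw [hd]; omega
      rw [h3]; omega
    · obtain ⟨f, hf⟩ := main_bound hT hScc (by rw [compl_compl]; exact hSc)
        (by rw [compl_compl]; exact hge)
      rw [compl_compl] at hf
      have h1 : rna G ≤ negCount G f := Nat.sInf_le ⟨f, rfl⟩
      have h2 : negCount G f = (negSet G f).ncard := rfl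
      have h3 : Cval G = Sᶜ.ncard - S.ncard := by
        unfold Cval; rw [hd]; omega
      rw [h3]; omega
end

section
/- For every integer n > 1 and every i with 1 ≤ i ≤ ⌈(n−1)/2⌉, there exists a tree T of order n with σ⁻(T) = i. -/
open SimpleGraph

variable {V : Type*}

open Finset

/-- parent function for the spider tree -/
def spar (n i v : ℕ) : ℕ := if i < v ∧ v ≤ n / 2 then v - i else 0

lemma spar_le (n i v : ℕ) : spar n i v ≤ v := by
  unfold spar; split <;> omega

lemma spar_lt (n i v : ℕ) (hi : 1 ≤ i) (hv : v ≠ 0) : spar n i v < v := by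
  unfold spar; split <;> omega

lemma spar_lt_n (n i v : ℕ) (hv : v < n) : spar n i v < n :=
  lt_of_le_of_lt (spar_le n i v) hv

/-- the spider graph on `Fin n` -/
def spider (n i : ℕ) : SimpleGraph (Fin n) where
  Adj a b := a ≠ b ∧ ((a : ℕ) = spar n i b ∨ (b : ℕ) = spar n i a)
  symm := ⟨fun _ _ ⟨h1, h2⟩ => ⟨h1.symm, h2.symm⟩⟩
  loopless := ⟨fun _ h => h.1 rfl⟩

lemma spider_adj (n i : ℕ) (a b : Fin n) :
    (spider n i).Adj a b ↔ a ≠ b ∧ ((a : ℕ) = spar n i b ∨ (b : ℕ) = spar n i a) := Iff.rfl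

def parFin (n i : ℕ) (v : Fin n) : Fin n := ⟨spar n i (v : ℕ), spar_lt_n n i v v.2⟩

lemma spider_adj_parFin (n i : ℕ) (hi : 1 ≤ i) (v : Fin n) (hv : (v:ℕ) ≠ 0) :
    (spider n i).Adj v (parFin n i v) := by
  refine ⟨fun h => ?_, Or.inr rfl⟩
  have h2 := congrArg Fin.val h
  simp only [parFin] at h2
  have h3 := spar_lt n i (v : ℕ) hi hv
  omega

/-- if `a` is adjacent to `b` and `b ≤ a` (as naturals) then `b` is the parent of `a`. -/
lemma adj_le_parent {n i : ℕ} (hi : 1 ≤ i) {a b : Fin n} (h : (spider n i).Adj a b)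
    (hle : (b : ℕ) ≤ (a : ℕ)) : (b : ℕ) = spar n i a := by
  rcases h with ⟨hne, h | h⟩
  · by_cases hb : (b : ℕ) = 0
    · exfalso; apply hne; apply Fin.ext
      have : spar n i (b:ℕ) = 0 := by unfold spar; split <;> omega
      omega
    · exfalso; have := spar_lt n i (b : ℕ) hi hb; omega
  · exact h

/-- every vertex is reachable from 0 -/
lemma spider_reachable (n i : ℕ) (hi : 1 ≤ i) (hn : 0 < n) (v : Fin n) :
    (spider n i).Reachable v ⟨0, hn⟩ := by
  obtain ⟨vv, hv⟩ := v
  induction vv using Nat.strong_induction_on with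
  | _ vv ih =>
    by_cases h0 : vv = 0
    · subst h0; exact Reachable.refl _
    · have hadj := spider_adj_parFin n i hi ⟨vv, hv⟩ h0
      have hlt : spar n i vv < vv := spar_lt n i vv hi h0
      exact (Adj.reachable hadj).trans (ih (spar n i vv) hlt _)

lemma spider_connected (n i : ℕ) (hi : 1 ≤ i) (hn : 0 < n) : (spider n i).Connected := by
  rw [connected_iff]
  exact ⟨fun u v => (spider_reachable n i hi hn u).trans (spider_reachable n i hi hn v).symm,
    ⟨⟨0, hn⟩⟩⟩

lemma spider_acyclic (n i : ℕ) (hi : 1 ≤ i) : (spider n i).IsAcyclic := by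
  intro u c hc
  classical
  have hmem : u ∈ c.support := Walk.start_mem_support c
  obtain ⟨v, hv, hvmax⟩ := Finset.exists_max_image c.support.toFinset (fun x => (x : ℕ))
    ⟨u, List.mem_toFinset.2 hmem⟩
  have hvsup : v ∈ c.support := List.mem_toFinset.1 hv
  have hc' := hc.rotate hvsup
  set c' := c.rotate v hvsup with hc'def
  have htail := Walk.support_rotate c v hvsup
  have hsup : ∀ x, x ∈ c'.support → (x : ℕ) ≤ (v : ℕ) := by
    intro x hx
    rw [c'.support_eq_cons] at hx
    rcases List.mem_cons.1 hx with rfl | hx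
    · exact le_refl _
    · exact hvmax x (List.mem_toFinset.2 (List.mem_of_mem_tail (htail.mem_iff.1 hx)))
  have hnil : ¬ c'.Nil := by
    rw [Walk.not_nil_iff_lt_length]
    have := hc'.three_le_length
    omega
  obtain ⟨w, hadj, q, hq⟩ := Walk.not_nil_iff.1 hnil
  have hwv : w ≠ v := hadj.ne'
  have hqnil : ¬ q.reverse.Nil := by
    rw [Walk.not_nil_iff_lt_length, Walk.length_reverse]
    rcases Nat.eq_zero_or_pos q.length with h | h
    · exact absurd (Walk.nil_iff_length_eq.2 h).eq hwv
    · exact h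
  obtain ⟨x, hadj2, q2, hq2⟩ := Walk.not_nil_iff.1 hqnil
  -- facts
  have hwsup : w ∈ c'.support := by
    rw [hq, Walk.support_cons]
    exact List.mem_cons_of_mem _ (Walk.start_mem_support q)
  have hxsup : x ∈ c'.support := by
    rw [hq, Walk.support_cons]
    apply List.mem_cons_of_mem
    have : x ∈ q.reverse.support := by
      rw [hq2, Walk.support_cons]
      exact List.mem_cons_of_mem _ (Walk.start_mem_support q2)
    rwa [Walk.support_reverse, List.mem_reverse] at this
  have hw : (w : ℕ) = spar n i v := adj_le_parent hi hadj (hsup w hwsup)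
  have hx : (x : ℕ) = spar n i v := adj_le_parent hi hadj2 (hsup x hxsup)
  have hwx : w = x := Fin.ext (hw.trans hx.symm)
  -- edge in q
  have hxe : s(v, x) ∈ q.edges := by
    have : s(v, x) ∈ q.reverse.edges := by
      rw [hq2, Walk.edges_cons]; exact List.mem_cons_self
    rwa [Walk.edges_reverse, List.mem_reverse] at this
  have hnodup : c'.edges.Nodup := hc'.edges_nodup
  rw [hq, Walk.edges_cons] at hnodup
  have := List.Nodup.notMem hnodup
  have heq : s(v, w) = s(v, x) := congrArg (fun z => s(v, z)) hwx
  rw [heq] at this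
  exact this hxe

lemma spider_isTree (n i : ℕ) (hi : 1 ≤ i) (hn : 0 < n) : (spider n i).IsTree :=
  ⟨spider_connected n i hi hn, spider_acyclic n i hi⟩

section UB
variable (n i : ℕ)

/-- the labeling function: vertices 1..n/2 get odd labels, the rest get even ones -/
def lab (v : ℕ) : ℕ := if v = 0 then 0 else if v ≤ n / 2 then 2 * v - 1 else 2 * (v - n / 2)

lemma lab_lt (v : ℕ) (hv : v < n) : lab n v < n := by
  unfold lab
  split
  · omega
  · split <;> omega

lemma lab_injOn (v w : ℕ) (hv : v < n) (hw : w < n) (h : lab n v = lab n w) : v = w := by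
  unfold lab at h
  split at h <;> split at h <;> (try split at h) <;> (try omega) <;>
    (try (split at h <;> omega))

lemma lab_mod (v : ℕ) (hv : v < n) : lab n v % 2 = if 1 ≤ v ∧ v ≤ n / 2 then 1 else 0 := by
  unfold lab
  split
  · rw [if_neg (by omega : ¬(1 ≤ v ∧ v ≤ n / 2))]
  · split
    · rw [if_pos (by omega : (1 ≤ v ∧ v ≤ n / 2))]; omega
    · rw [if_neg (by omega : ¬(1 ≤ v ∧ v ≤ n / 2))]; omega

noncomputable def labEquiv : Fin n ≃ Fin (Fintype.card (Fin n)) :=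
  (Equiv.ofBijective (fun v : Fin n => (⟨lab n (v : ℕ), lab_lt n v v.2⟩ : Fin n))
    ((Fintype.bijective_iff_injective_and_card _).2
      ⟨fun v w h => Fin.ext (lab_injOn n _ _ v.2 w.2 (congrArg Fin.val h)), rfl⟩)).trans
    (finCongr (Fintype.card_fin n).symm)

lemma labEquiv_val (v : Fin n) : ((labEquiv n v : Fin (Fintype.card (Fin n))) : ℕ) = lab n (v : ℕ) := rfl

end UB

lemma negSet_spider_eq (n i : ℕ) (hn : 1 < n) (hi : 1 ≤ i) (hi2 : i ≤ n / 2) :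
    negSet (spider n i) (labEquiv n) =
      ↑(((univ : Finset (Fin n)).filter (fun v : Fin n => 1 ≤ (v:ℕ) ∧ (v:ℕ) ≤ i)).image
        (fun v => s(v, parFin n i v))) := by
  have hmod : ∀ v : Fin n, ((labEquiv n v : Fin _) : ℕ) % 2
      = if 1 ≤ (v:ℕ) ∧ (v:ℕ) ≤ n / 2 then 1 else 0 := by
    intro v; rw [labEquiv_val]; exact lab_mod n v v.2
  ext e
  induction e with
  | _ a b =>
    simp only [negSet, Set.mem_setOf_eq, mem_edgeSet, Sym2.lift_mk, Finset.coe_image,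
      Set.mem_image, Finset.mem_coe, Finset.mem_filter, Finset.mem_univ, true_and]
    constructor
    · rintro ⟨⟨hne, hpar⟩, hcross⟩
      rw [hmod, hmod] at hcross
      -- wlog: b is the parent of a
      have key : ∀ a b : Fin n, (b:ℕ) = spar n i (a:ℕ) → a ≠ b →
          ((if 1 ≤ (a:ℕ) ∧ (a:ℕ) ≤ n / 2 then 1 else 0) ≠
            (if 1 ≤ (b:ℕ) ∧ (b:ℕ) ≤ n / 2 then (1:ℕ) else 0)) →
          ∃ x : Fin n, (1 ≤ (x:ℕ) ∧ (x:ℕ) ≤ i) ∧ s(x, parFin n i x) = s(a, b) := by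
        intro a b hb hne hcr
        refine ⟨a, ⟨?_, ?_⟩, ?_⟩
        · -- a ≠ 0
          by_contra h0
          have ha0 : (a:ℕ) = 0 := by omega
          have : spar n i (a:ℕ) = 0 := by unfold spar; split <;> omega
          exact hne (Fin.ext (by omega))
        · -- a ≤ i
          by_contra hgt
          unfold spar at hb
          split at hb
          · -- b = a - i, both in [1, n/2] or cross fails
            have : 1 ≤ (a:ℕ) ∧ (a:ℕ) ≤ n/2 := by omega
            have hb2 : 1 ≤ (b:ℕ) ∧ (b:ℕ) ≤ n/2 := by omega
            simp [this, hb2] at hcr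
          · -- b = 0 and a > n/2 (since ¬(i < a ∧ a ≤ n/2) and a > i)
            push_neg at *
            have ha : ¬(1 ≤ (a:ℕ) ∧ (a:ℕ) ≤ n/2) := by omega
            have hb2 : ¬(1 ≤ (b:ℕ) ∧ (b:ℕ) ≤ n/2) := by omega
            simp [ha, hb2] at hcr
        · have hpb : parFin n i a = b := Fin.ext (by simp [parFin, ← hb])
          rw [hpb]
      rcases hpar with h | h
      · obtain ⟨x, hx, hxe⟩ := key b a h (Ne.symm hne) (Ne.symm hcross)
        exact ⟨x, hx, hxe.trans (Sym2.eq_swap)⟩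
      · exact key a b h hne hcross
    · rintro ⟨x, ⟨hx1, hx2⟩, hxe⟩
      have hxpar : (spar n i (x:ℕ)) = 0 := by unfold spar; split <;> omega
      have hadj := spider_adj_parFin n i hi x (by omega)
      constructor
      · rw [← mem_edgeSet, ← hxe, mem_edgeSet]; exact hadj
      · rw [hmod, hmod]
        -- need the parity claim transported along hxe
        have h1 : 1 ≤ (x:ℕ) ∧ (x:ℕ) ≤ n/2 := ⟨hx1, le_trans hx2 hi2⟩
        have h0 : ¬(1 ≤ ((parFin n i x : Fin n):ℕ) ∧ ((parFin n i x : Fin n):ℕ) ≤ n/2) := by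
          simp [parFin, hxpar]
        rcases Sym2.eq_iff.1 hxe with ⟨rfl, rfl⟩ | ⟨h3, h4⟩
        · simp [h1, h0]
        · rw [← h3, ← h4]; simp only [if_pos h1, if_neg h0]; omega

lemma negCount_spider (n i : ℕ) (hn : 1 < n) (hi : 1 ≤ i) (hi2 : i ≤ n / 2) :
    negCount (spider n i) (labEquiv n) = i := by
  rw [negCount, negSet_spider_eq n i hn hi hi2, Set.ncard_coe_finset]
  rw [Finset.card_image_of_injOn]
  · -- card of the filter is i
    have h1 : ((univ : Finset (Fin n)).filter (fun v : Fin n => 1 ≤ (v:ℕ) ∧ (v:ℕ) ≤ i)).card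
        = (Finset.Ico 1 (i+1)).card := by
      apply Finset.card_nbij (fun v => ((v : Fin n) : ℕ))
      · intro a ha
        simp only [Finset.mem_coe, mem_filter] at ha
        simp only [Finset.mem_coe, mem_Ico]
        omega
      · intro a _ b _ h
        exact Fin.ext h
      · intro t ht
        simp only [Finset.coe_Ico, Set.mem_Ico] at ht
        have htn : t < n := by
          have := Nat.div_le_self n 2
          omega
        refine ⟨⟨t, htn⟩, ?_, rfl⟩
        simp only [Finset.coe_filter, Set.mem_setOf_eq, Finset.mem_univ, true_and]
        omega
    rw [h1, Nat.card_Ico]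
    omega
  · intro a ha b hb h
    simp only [Finset.coe_filter, Set.mem_setOf_eq, Finset.mem_univ, true_and] at ha hb
    have hpa : (spar n i (a:ℕ)) = 0 := by unfold spar; split <;> omega
    have hpb : (spar n i (b:ℕ)) = 0 := by unfold spar; split <;> omega
    rcases Sym2.eq_iff.1 h with ⟨h1, _⟩ | ⟨h1, h2⟩
    · exact h1
    · exfalso
      have : (a : ℕ) = (parFin n i b : ℕ) := congrArg Fin.val h1
      simp [parFin, hpb] at this
      omega

/-- which leg a vertex belongs to -/
def legOf (n i v : ℕ) : ℕ := if v ≤ n / 2 then (v - 1) % i else i + (v - n / 2 - 1)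

lemma legOf_par (n i v : ℕ) (hv : spar n i v ≠ 0) :
    legOf n i (spar n i v) = legOf n i v := by
  have h : i < v ∧ v ≤ n / 2 := by
    by_contra hc
    apply hv; unfold spar; rw [if_neg hc]
  have hs : spar n i v = v - i := by unfold spar; rw [if_pos h]
  rw [hs]
  unfold legOf
  rw [if_pos (by omega : v - i ≤ n / 2), if_pos h.2]
  have h2 : v - 1 = (v - i - 1) + i := by omega
  rw [h2, Nat.add_mod_right]

lemma card_filter_odd_range (N : ℕ) :
    ((Finset.range N).filter (fun v => v % 2 = 1)).card = N / 2 := by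
  induction N with
  | zero => simp
  | succ N ih =>
    rw [Finset.range_add_one, Finset.filter_insert]
    by_cases h : N % 2 = 1
    · rw [if_pos h, Finset.card_insert_of_notMem (by simp)]
      omega
    · rw [if_neg h]
      omega

lemma card_filter_odd_fin (N : ℕ) :
    ((univ : Finset (Fin N)).filter (fun v : Fin N => (v:ℕ) % 2 = 1)).card = N / 2 := by
  rw [← card_filter_odd_range N]
  apply Finset.card_nbij (fun v => ((v : Fin N) : ℕ))
  · intro a ha
    simp only [Finset.mem_coe, Finset.mem_filter, mem_univ, true_and] at ha
    exact Finset.mem_filter.2 ⟨Finset.mem_range.2 a.2, ha⟩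
  · intro a _ b _ h
    exact Fin.ext h
  · intro t ht
    simp only [coe_filter, Set.mem_setOf_eq, Finset.mem_coe, Finset.mem_range] at ht
    refine ⟨⟨t, ht.1⟩, ?_, rfl⟩
    simp only [coe_filter, Set.mem_setOf_eq, Finset.mem_coe, Finset.mem_filter,
      mem_univ, true_and]
    exact ht.2

lemma le_negCount (n i : ℕ) (hn : 1 < n) (hi : 1 ≤ i) (hi2 : i ≤ n / 2)
    (f : Fin n ≃ Fin (Fintype.card (Fin n))) : i ≤ negCount (spider n i) f := by
  classical
  set m := n / 2 with hm_def
  have hmn : m ≤ n := Nat.div_le_self n 2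
  have hm1 : 1 ≤ m := le_trans hi hi2
  set P : Fin n → ℕ := fun v => ((f v : Fin _) : ℕ) % 2 with hP_def
  have h01 : ∀ v, P v = 0 ∨ P v = 1 := fun v => by simp only [hP_def]; omega
  set z : Fin n := ⟨0, by omega⟩ with hz_def
  set A : Finset (Fin n) := univ.filter (fun v => P v ≠ P z) with hA_def
  -- Step 1 : m ≤ A.card
  have hodd : (univ.filter (fun v : Fin n => P v = 1)).card = m := by
    have hbij : (univ.filter (fun v : Fin n => P v = 1)).card
        = ((univ : Finset (Fin (Fintype.card (Fin n)))).filter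
            (fun w : Fin (Fintype.card (Fin n)) => (w:ℕ) % 2 = 1)).card := by
      apply Finset.card_nbij (fun v => f v)
      · intro a ha
        simp only [Finset.mem_coe, Finset.mem_filter, mem_univ, true_and, hP_def] at ha ⊢
        exact ha
      · intro a _ b _ h
        exact f.injective h
      · intro w hw
        simp only [coe_filter, Set.mem_setOf_eq, Finset.mem_coe, mem_univ, true_and] at hw
        refine ⟨f.symm w, ?_, by simp⟩
        simp only [coe_filter, Set.mem_setOf_eq, Finset.mem_coe, Finset.mem_filter,
          mem_univ, true_and, hP_def]
        simpa using hw
    rw [hbij, card_filter_odd_fin, Fintype.card_fin]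
  have htot : (univ.filter (fun v : Fin n => P v = 1)).card
      + (univ.filter (fun v : Fin n => ¬ P v = 1)).card = n := by
    rw [Finset.card_filter_add_card_filter_not]
    simp
  have hA : m ≤ A.card := by
    rcases h01 z with hz | hz
    · have : A = univ.filter (fun v : Fin n => P v = 1) := by
        apply Finset.filter_congr
        intro v _
        rcases h01 v with h | h <;> simp [h, hz]
      rw [this, hodd]
    · have : A = univ.filter (fun v : Fin n => ¬ P v = 1) := by
        apply Finset.filter_congr
        intro v _
        rcases h01 v with h | h <;> simp [h, hz]
      rw [this]
      omega
  -- Step 2 : descending to a negative edge within the same leg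
  have descend : ∀ v : Fin n, (v:ℕ) ≠ 0 → P v ≠ P z →
      ∃ w : Fin n, (w:ℕ) ≠ 0 ∧ legOf n i (w:ℕ) = legOf n i (v:ℕ)
        ∧ P w ≠ P (parFin n i w) := by
    intro v
    obtain ⟨vv, hvlt⟩ := v
    induction vv using Nat.strong_induction_on with
    | _ vv ih =>
      intro hv0 hvP
      set v : Fin n := ⟨vv, hvlt⟩ with hv_def
      by_cases hcross : P v ≠ P (parFin n i v)
      · exact ⟨v, hv0, rfl, hcross⟩
      · push_neg at hcross
        have hp0 : (parFin n i v : ℕ) ≠ 0 := by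
          intro h0
          have : parFin n i v = z := Fin.ext h0
          rw [this] at hcross
          exact hvP hcross
        have hplt : spar n i vv < vv := spar_lt n i vv hi hv0
        obtain ⟨w, hw0, hwleg, hwP⟩ := ih (spar n i vv) hplt (spar_lt_n n i vv hvlt)
          hp0 (fun h => hvP (hcross.trans h))
        refine ⟨w, hw0, ?_, hwP⟩
        rw [hwleg]
        exact legOf_par n i vv hp0
  -- Step 3 : the set of legs touched by A
  set S : Finset ℕ := A.image (fun v : Fin n => legOf n i (v:ℕ)) with hS_def
  have key : ∀ t : ℕ, ∃ w : Fin n, t ∈ S →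
      (w:ℕ) ≠ 0 ∧ legOf n i (w:ℕ) = t ∧
        s(w, parFin n i w) ∈ negSet (spider n i) f := by
    intro t
    by_cases ht : t ∈ S
    · obtain ⟨v, hvA, hvleg⟩ := Finset.mem_image.1 ht
      have hvP : P v ≠ P z := (Finset.mem_filter.1 hvA).2
      have hv0 : (v:ℕ) ≠ 0 := by
        intro h0
        exact hvP (by rw [show v = z from Fin.ext h0])
      obtain ⟨w, hw0, hwleg, hwP⟩ := descend v hv0 hvP
      refine ⟨w, fun _ => ⟨hw0, hwleg.trans hvleg, ?_⟩⟩
      constructor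
      · exact spider_adj_parFin n i hi w hw0
      · exact hwP
    · exact ⟨z, fun h => absurd h ht⟩
  choose W hW using key
  -- Step 4 : at least i legs are touched
  have hScard : i ≤ S.card := by
    by_contra hlt
    push_neg at hlt
    set q := m / i with hq_def
    set r := m % i with hr_def
    have hdm : i * q + r = m := Nat.div_add_mod m i
    have hq1 : 1 ≤ q := (Nat.one_le_div_iff (by omega)).2 hi2
    have hrlt : r < i := Nat.mod_lt _ (by omega)
    set leg : ℕ → Finset (Fin n) :=
      fun t => univ.filter (fun v : Fin n => (v:ℕ) ≠ 0 ∧ legOf n i (v:ℕ) = t) with hleg_def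
    have hAsub : A ⊆ S.biUnion leg := by
      intro v hv
      have hvP : P v ≠ P z := (Finset.mem_filter.1 hv).2
      have hv0 : (v:ℕ) ≠ 0 := by
        intro h0
        exact hvP (by rw [show v = z from Fin.ext h0])
      apply Finset.mem_biUnion.2
      exact ⟨legOf n i (v:ℕ), Finset.mem_image_of_mem _ hv,
        Finset.mem_filter.2 ⟨mem_univ _, hv0, rfl⟩⟩
    have hlegcard : ∀ t, (leg t).card ≤ q + if t < r then 1 else 0 := by
      intro t
      by_cases hti : t < i
      · -- inject into range
        have h4 : m < i * (q + 1) := by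
          calc m = i * q + r := hdm.symm
            _ < i * q + i := Nat.add_lt_add_left hrlt _
            _ = i * (q + 1) := (Nat.mul_succ i q).symm
        have extract : ∀ v : Fin n, v ∈ leg t →
            1 ≤ (v:ℕ) ∧ (v:ℕ) ≤ m ∧ ((v:ℕ) - 1) % i = t := by
          intro v hv
          simp only [hleg_def, Finset.mem_filter, mem_univ, true_and] at hv
          obtain ⟨hv0, hvt⟩ := hv
          unfold legOf at hvt
          split at hvt
          · exact ⟨by omega, by assumption, hvt⟩
          · omega
        have hsub : (leg t).card ≤ (Finset.range (q + if t < r then 1 else 0)).card := by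
          apply Finset.card_le_card_of_injOn (fun v => (((v : Fin n) : ℕ) - 1) / i)
          · intro v hv
            obtain ⟨hv1, hvm, hmod⟩ := extract v hv
            rw [Finset.mem_coe, Finset.mem_range]
            by_cases htr : t < r
            · rw [if_pos htr, Nat.div_lt_iff_lt_mul (by omega : 0 < i)]
              have h5 : (v:ℕ) - 1 < m := by omega
              have h6 : (v:ℕ) - 1 < i * (q + 1) := lt_trans h5 h4
              rw [Nat.mul_comm] at h6
              exact h6
            · rw [if_neg htr, Nat.div_lt_iff_lt_mul (by omega : 0 < i)]
              by_contra hge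
              push_neg at hge
              have h5 : i * q ≤ (v:ℕ) - 1 := by rw [Nat.mul_comm i q]; exact hge
              have hvm2 : (v:ℕ) - 1 < i * q + r := by
                have : (v:ℕ) - 1 < m := by omega
                omega
              have hu2 : (v:ℕ) - 1 - i * q < r := by omega
              have ht' : t = (v:ℕ) - 1 - i * q := by
                calc t = ((v:ℕ) - 1) % i := hmod.symm
                  _ = (((v:ℕ) - 1 - i * q) + i * q) % i := by rw [Nat.sub_add_cancel h5]
                  _ = ((v:ℕ) - 1 - i * q) % i := Nat.add_mul_mod_self_left _ i q
                  _ = (v:ℕ) - 1 - i * q := Nat.mod_eq_of_lt (lt_trans hu2 hrlt)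
              omega
          · intro a ha b hb hdiv
            obtain ⟨ha1, ham, hamod⟩ := extract a (Finset.mem_coe.1 ha)
            obtain ⟨hb1, hbm, hbmod⟩ := extract b (Finset.mem_coe.1 hb)
            dsimp only at hdiv
            have e1 := Nat.div_add_mod (((a : Fin n):ℕ) - 1) i
            have e2 := Nat.div_add_mod (((b : Fin n):ℕ) - 1) i
            have e3 : i * ((((a : Fin n):ℕ) - 1) / i) = i * ((((b : Fin n):ℕ) - 1) / i) := by
              rw [hdiv]
            apply Fin.ext
            omega
        simpa using hsub
      · -- a single extra leaf
        have : (leg t).card ≤ 1 := by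
          apply Finset.card_le_one.2
          intro a ha b hb
          simp only [hleg_def, Finset.mem_filter, mem_univ, true_and] at ha hb
          apply Fin.ext
          rcases ha with ⟨ha0, hat⟩
          rcases hb with ⟨hb0, hbt⟩
          have hia := Nat.mod_lt ((a:ℕ) - 1) (y := i) (by omega)
          have hib := Nat.mod_lt ((b:ℕ) - 1) (y := i) (by omega)
          unfold legOf at hat hbt
          split at hat <;> split at hbt <;> omega
        omega
    have hsum : A.card ≤ ∑ t ∈ S, (leg t).card :=
      le_trans (Finset.card_le_card hAsub) (Finset.card_biUnion_le)
    have hsum2 : ∑ t ∈ S, (leg t).card ≤ S.card * q + (S.filter (fun t => t < r)).card := by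
      calc ∑ t ∈ S, (leg t).card ≤ ∑ t ∈ S, (q + if t < r then 1 else 0) :=
            Finset.sum_le_sum (fun t _ => hlegcard t)
        _ = S.card * q + ∑ t ∈ S, (if t < r then 1 else 0) := by
            rw [Finset.sum_add_distrib, Finset.sum_const, smul_eq_mul]
        _ = S.card * q + (S.filter (fun t => t < r)).card := by
            rw [Finset.sum_ite, Finset.sum_const, Finset.sum_const]
            simp
    have hfilr : (S.filter (fun t => t < r)).card ≤ r := by
      have : S.filter (fun t => t < r) ⊆ Finset.range r := by
        intro t ht
        simp only [Finset.mem_filter] at ht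
        exact Finset.mem_range.2 ht.2
      simpa using Finset.card_le_card this
    -- contradiction
    obtain ⟨j, rfl⟩ : ∃ j, i = j + 1 := ⟨i - 1, by omega⟩
    have hSj : S.card ≤ j := by omega
    have h1 : S.card * q ≤ j * q := Nat.mul_le_mul_right q hSj
    have h2 : (j + 1) * q = j * q + q := by ring
    omega
  -- Step 5 : make the injection into negSet
  have hfin : (negSet (spider n i) f).Finite := Set.toFinite _
  have hinj : S.card ≤ hfin.toFinset.card := by
    apply Finset.card_le_card_of_injOn (fun t => s(W t, parFin n i (W t)))
    · intro t ht
      rw [Finset.mem_coe, Set.Finite.mem_toFinset]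
      exact ((hW t) ht).2.2
    · intro t ht t' ht' h
      obtain ⟨hw0, hwleg, _⟩ := (hW t) ht
      obtain ⟨hw0', hwleg', _⟩ := (hW t') ht'
      rcases Sym2.eq_iff.1 h with ⟨h1, _⟩ | ⟨h1, h2⟩
      · rw [← hwleg, ← hwleg', h1]
      · exfalso
        have e1 : (W t : ℕ) = spar n i (W t' : ℕ) := congrArg Fin.val h1
        have e2 : spar n i (W t : ℕ) = (W t' : ℕ) := congrArg Fin.val h2
        have l1 := spar_lt n i (W t' : ℕ) hi hw0'
        have l2 := spar_lt n i (W t : ℕ) hi hw0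
        omega
  have : negCount (spider n i) f = hfin.toFinset.card :=
    Set.ncard_eq_toFinset_card _ hfin
  omega

/-- For every n > 1 and every 1 ≤ i ≤ ⌈(n−1)/2⌉, there is a tree of order n
with rna number i. -/
theorem exists_tree_rna (n i : ℕ) (hn : 1 < n) (hi1 : 1 ≤ i) (hi2 : i ≤ n / 2) :
    ∃ (W : Type) (_ : Fintype W) (G : SimpleGraph W),
      Fintype.card W = n ∧ G.IsTree ∧ rna G = i := by
  refine ⟨Fin n, inferInstance, spider n i, Fintype.card_fin n,
    spider_isTree n i hi1 (by omega), ?_⟩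
  apply le_antisymm
  · rw [rna]
    exact Nat.sInf_le ⟨labEquiv n, negCount_spider n i hn hi1 hi2⟩
  · rw [rna]
    apply le_csInf ⟨_, Set.mem_range_self (labEquiv n)⟩
    rintro b ⟨f, rfl⟩
    exact le_negCount n i hn hi1 hi2 f
end

section
/- There exists a connected graph G with σ⁻(G) = 2 all of whose spanning trees T satisfy σ⁻(T) = 1; for example, the graph on 5 vertices consisting of a triangle with one pendant vertex attached to each of two distinct triangle vertices has this property. -/
/-!
In the graph itself a triangle always carries an even number of negative edges; if it carries
none, its three vertices share a parity, which must be that of the three even labels, and then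
both pendant edges are negative. So `rna = 2`.

A spanning tree is acyclic, so it omits some triangle edge `e`. Some labelling of the whole graph
has exactly two negative edges, one of which is `e`, so on the tree it has at most one. And a
connected graph has at least one negative edge: the vertices labelled `0` and `1` are joined by a
path, which must cross a change of parity.
-/

open SimpleGraph

variable {V : Type*}

/-- The triangle 0,1,2 with pendant vertices 3 (attached to 0) and 4 (attached to 1). -/
def counterexampleGraph : SimpleGraph (Fin 5) :=
  SimpleGraph.fromRel (fun a b =>
    (a = 0 ∧ b = 1) ∨ (a = 1 ∧ b = 2) ∨ (a = 0 ∧ b = 2) ∨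
    (a = 0 ∧ b = 3) ∨ (a = 1 ∧ b = 4))


section Rna

variable [Fintype V]

instance decidableSym2LiftParity (f : V ≃ Fin (Fintype.card V)) (e : Sym2 V) :
    Decidable (Sym2.lift ⟨fun u v => ((f u : ℕ) % 2 ≠ (f v : ℕ) % 2),
      fun _ _ => propext ne_comm⟩ e) :=
  Quot.recOnSubsingleton e fun p =>
    inferInstanceAs (Decidable ((f p.1 : ℕ) % 2 ≠ (f p.2 : ℕ) % 2))

instance decidableMemNegSet (G : SimpleGraph V) [DecidableRel G.Adj]
    (f : V ≃ Fin (Fintype.card V)) : DecidablePred (· ∈ negSet G f) := fun _ =>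
  inferInstanceAs (Decidable (_ ∧ _))

theorem negCount_eq_card_filter (G : SimpleGraph V) [DecidableRel G.Adj]
    (f : V ≃ Fin (Fintype.card V)) :
    negCount G f = (Finset.univ.filter (· ∈ negSet G f)).card := by
  rw [negCount, Set.ncard_eq_toFinset_card', Set.filter_mem_univ_eq_toFinset]

theorem rna_le_negCount (G : SimpleGraph V) (f : V ≃ Fin (Fintype.card V)) :
    rna G ≤ negCount G f :=
  Nat.sInf_le ⟨f, rfl⟩

theorem le_rna {G : SimpleGraph V} {n : ℕ} (h : ∀ f, n ≤ negCount G f) : n ≤ rna G :=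
  le_csInf ⟨_, Fintype.equivFin V, rfl⟩ (Set.forall_mem_range.2 h)

theorem negSet_mono {T G : SimpleGraph V} (hTG : T ≤ G) (f : V ≃ Fin (Fintype.card V)) :
    negSet T f ⊆ negSet G f :=
  fun _ ⟨he, hneg⟩ => ⟨edgeSet_mono hTG he, hneg⟩

theorem rna_lt_negCount_of_le {T G : SimpleGraph V} (hTG : T ≤ G) {f : V ≃ Fin (Fintype.card V)}
    {e : Sym2 V} (heG : e ∈ negSet G f) (heT : e ∉ T.edgeSet) : rna T < negCount G f :=
  (rna_le_negCount T f).trans_lt <| Set.ncard_lt_ncard <|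
    (Set.ssubset_iff_of_subset (negSet_mono hTG f)).2 ⟨e, heG, fun h => heT h.1⟩

theorem SimpleGraph.Connected.negSet_nonempty {G : SimpleGraph V} (hG : G.Connected)
    (hV : 2 ≤ Fintype.card V) (f : V ≃ Fin (Fintype.card V)) : (negSet G f).Nonempty := by
  obtain ⟨p⟩ := hG (f.symm ⟨0, by omega⟩) (f.symm ⟨1, hV⟩)
  obtain ⟨d, -, hfst, hsnd⟩ := p.exists_boundary_dart {w | (f w : ℕ) % 2 = 0} (by simp) (by simp)
  refine ⟨d.edge, d.edge_mem, ?_⟩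
  simp only [Set.mem_ofPred_eq] at hfst hsnd
  simp [Dart.edge, hfst, Ne.symm hsnd]

theorem SimpleGraph.Connected.one_le_rna {G : SimpleGraph V} (hG : G.Connected)
    (hV : 2 ≤ Fintype.card V) : 1 ≤ rna G :=
  le_rna fun f => (hG.negSet_nonempty hV f).ncard_pos

end Rna

theorem SimpleGraph.IsAcyclic.not_adj_of_adj_of_adj {G : SimpleGraph V} (hG : G.IsAcyclic)
    {a b c : V} (hab : G.Adj a b) (hbc : G.Adj b c) : ¬G.Adj a c := by
  classical
  exact fun hac => hG.cliqueFree le_rfl {a, b, c} (is3Clique_triple_iff.2 ⟨hab, hac, hbc⟩)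

instance : DecidableRel counterexampleGraph.Adj := fun a b =>
  decidable_of_iff' _ (fromRel_adj _ a b)

def finLabeling {n : ℕ} (σ : Equiv.Perm (Fin n)) : Fin n ≃ Fin (Fintype.card (Fin n)) :=
  σ.trans (finCongr (Fintype.card_fin n).symm)

theorem counterexampleGraph_connected : counterexampleGraph.Connected := by
  decide

/- `swap 0 1` makes `0, 3` odd and `1, 2, 4` even, so its negative edges are `s(0, 1)` and
`s(0, 2)`; under `swap 3 4` they are `s(0, 1)` and `s(1, 2)`. -/
theorem negCount_counterexampleGraph_swap_zero_one :
    negCount counterexampleGraph (finLabeling (Equiv.swap 0 1)) = 2 := by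
  rw [negCount_eq_card_filter]
  decide

theorem negCount_counterexampleGraph_swap_three_four :
    negCount counterexampleGraph (finLabeling (Equiv.swap 3 4)) = 2 := by
  rw [negCount_eq_card_filter]
  decide

set_option maxRecDepth 40000 in
theorem two_le_negCount_counterexampleGraph (f : Fin 5 ≃ Fin (Fintype.card (Fin 5))) :
    2 ≤ negCount counterexampleGraph f := by
  rw [negCount_eq_card_filter]
  revert f
  decide

theorem rna_counterexampleGraph : rna counterexampleGraph = 2 :=
  le_antisymm (negCount_counterexampleGraph_swap_zero_one ▸ rna_le_negCount _ _)
    (le_rna two_le_negCount_counterexampleGraph)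

theorem rna_le_one_of_le_of_not_adj {T : SimpleGraph (Fin 5)} (hT : T ≤ counterexampleGraph)
    (h : ¬T.Adj 0 1 ∨ ¬T.Adj 1 2 ∨ ¬T.Adj 0 2) : rna T ≤ 1 := by
  have rna_le_one {f e} (hf : negCount counterexampleGraph f = 2)
      (he : e ∈ negSet counterexampleGraph f) (heT : e ∉ T.edgeSet) : rna T ≤ 1 := by
    have := rna_lt_negCount_of_le hT he heT
    omega
  rcases h with h | h | h
  · exact rna_le_one negCount_counterexampleGraph_swap_zero_one (e := s(0, 1)) (by decide) h
  · exact rna_le_one negCount_counterexampleGraph_swap_three_four (e := s(1, 2)) (by decide) h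
  · exact rna_le_one negCount_counterexampleGraph_swap_zero_one (e := s(0, 2)) (by decide) h

/-- There is a connected graph with rna number 2 all of whose spanning trees
have rna number 1, namely `counterexampleGraph`. -/
theorem exists_rna_two_all_spanning_trees_one :
    counterexampleGraph.Connected ∧ rna counterexampleGraph = 2 ∧
      ∀ T : SimpleGraph (Fin 5), T ≤ counterexampleGraph → T.IsTree → rna T = 1 := by
  refine ⟨counterexampleGraph_connected, rna_counterexampleGraph, fun T hTG hT => ?_⟩
  have hmiss : ¬T.Adj 0 1 ∨ ¬T.Adj 1 2 ∨ ¬T.Adj 0 2 := by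
    by_contra! h
    exact hT.isAcyclic.not_adj_of_adj_of_adj h.1 h.2.1 h.2.2
  exact le_antisymm (rna_le_one_of_le_of_not_adj hTG hmiss) (hT.connected.one_le_rna (by simp))
end
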